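/- Let p be a prime and R a commutative ring in which p·1 = 0. Let u ∈ R[Y] be a polynomial of degree < p. Then the following are equivalent: (i) u(0) = 1 and u(Y + Y') ≡ u(Y)·u(Y') modulo the ideal (Y^p, Y'^p) in the polynomial ring R[Y, Y']; (ii) there exists x ∈ R with x^p = 0 such that u = ∑_{i=0}^{p-1} (i!)^{-1} x^i Y^i. Moreover, in case (ii) the element x is uniquely determined by u: it is the coefficient of Y in u. (This is the ring-level content of the statement that the Cartier dual of α_p is canonically isomorphic to α_p: group-like elements of R[Y]/(Y^p) for the additive comultiplication Y ↦ Y⊗1 + 1⊗Y are exactly the truncated exponentials E(xY) with x^p = 0.) -/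

import Mathlib

/-!
Truncated exponentials `E(a) = ∑_{i<p} a^i / i!` satisfy `E(a + b) = E(a) E(b)` as soon as all
products `a^j b^k` with `j + k ≥ p` vanish, which gives (ii) ⇒ (i). Conversely, mapping `Y ↦ Y`,
`Y' ↦ T` into `R[Y][T]` and reading off the coefficient of `T` turns (i) into
`u' ≡ u'(0) u mod Y^p`, hence `u' = x u` with `x = u'(0)` for degree reasons. This differential
equation forces `i! · uᵢ = x^i` for every `i`; at `i = p` it gives `x^p = 0`.
-/

open Finset
open scoped Nat

section InvFactorial

variable {p : ℕ} {S : Type*} [CommRing S]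

theorem natCast_val_eq_castHom [NeZero p] (hS : (p : S) = 0) (a : ZMod p) :
    ((a.val : ℕ) : S) = ZMod.castHom (ringChar.dvd hS) S a := by
  rw [ZMod.castHom_apply, ZMod.cast_eq_val]

variable [Fact p.Prime]

theorem natCast_factorial_ne_zero {i : ℕ} (hi : i < p) : (i ! : ZMod p) ≠ 0 := by
  rw [Ne, ZMod.natCast_eq_zero_iff, (Fact.out : p.Prime).dvd_factorial]
  omega

theorem natCast_val_inv_factorial_mul_factorial (hS : (p : S) = 0) {i : ℕ} (hi : i < p) :
    (((i ! : ZMod p)⁻¹.val : ℕ) : S) * (i ! : S) = 1 := by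
  rw [natCast_val_eq_castHom hS, ← map_natCast (ZMod.castHom (ringChar.dvd hS) S), ← map_mul,
    inv_mul_cancel₀ (natCast_factorial_ne_zero hi), map_one]

theorem natCast_val_inv_factorial_mul_choose (hS : (p : S) = 0) {i j : ℕ} (hi : i < p)
    (hj : j ≤ i) :
    (((i ! : ZMod p)⁻¹.val : ℕ) : S) * (i.choose j : S) =
      (((j ! : ZMod p)⁻¹.val : ℕ) : S) * (((i - j)! : ZMod p)⁻¹.val : ℕ) := by
  simp only [natCast_val_eq_castHom hS, ← map_natCast (ZMod.castHom (ringChar.dvd hS) S),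
    ← map_mul]
  congr 1
  have hfac : (i.choose j * j ! * (i - j)! : ZMod p) = i ! := by
    rw [← Nat.cast_mul, ← Nat.cast_mul, Nat.choose_mul_factorial_mul_factorial hj]
  have := natCast_factorial_ne_zero (p := p) (show j < p by omega)
  have := natCast_factorial_ne_zero (p := p) (show i - j < p by omega)
  have := natCast_factorial_ne_zero (p := p) hi
  field_simp
  linear_combination hfac

end InvFactorial

section TruncExp

variable (p : ℕ) {S T : Type*} [CommRing S] [CommRing T]

def truncExp (a : S) : S :=
  ∑ i ∈ range p, (((i ! : ZMod p)⁻¹.val : ℕ) : S) * a ^ i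

variable {p}

theorem map_truncExp {F : Type*} [FunLike F S T] [RingHomClass F S T] (f : F) (a : S) :
    f (truncExp p a) = truncExp p (f a) := by
  simp [truncExp]

theorem truncExp_add [Fact p.Prime] (hS : (p : S) = 0) {a b : S}
    (hab : ∀ j k, p ≤ j + k → a ^ j * b ^ k = 0) :
    truncExp p (a + b) = truncExp p a * truncExp p b := by
  set e : ℕ → S := fun i ↦ ((i ! : ZMod p)⁻¹.val : S)
  calc truncExp p (a + b)
      = ∑ i ∈ range p, ∑ j ∈ range (i + 1), e j * a ^ j * (e (i - j) * b ^ (i - j)) := by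
        refine sum_congr rfl fun i hi ↦ ?_
        rw [add_pow, mul_sum]
        refine sum_congr rfl fun j hj ↦ ?_
        have := natCast_val_inv_factorial_mul_choose hS (mem_range.1 hi)
          (Nat.lt_succ_iff.1 (mem_range.1 hj))
        linear_combination a ^ j * b ^ (i - j) * this
    _ = ∑ j ∈ range p, ∑ k ∈ range (p - j), e j * a ^ j * (e k * b ^ k) :=
        sum_range_diag_flip p fun j k ↦ e j * a ^ j * (e k * b ^ k)
    _ = ∑ j ∈ range p, ∑ k ∈ range p, e j * a ^ j * (e k * b ^ k) := by
        refine sum_congr rfl fun j _ ↦ sum_subset (range_subset_range.2 (Nat.sub_le p j)) ?_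
        intro k _ hk
        rw [mem_range, not_lt] at hk
        rw [mul_mul_mul_comm, hab j k (by omega), mul_zero]
    _ = truncExp p a * truncExp p b := (sum_mul_sum _ _ _ _).symm

end TruncExp

namespace Polynomial

theorem coeff_mul_factorial_of_derivative_eq_smul {R : Type*} [CommSemiring R] {u : R[X]} {x : R}
    (hu : derivative u = x • u) (h0 : u.coeff 0 = 1) (n : ℕ) :
    u.coeff n * n ! = x ^ n := by
  induction n with
  | zero => simp [h0]
  | succ n ih =>
    have hrec : u.coeff (n + 1) * (n + 1) = x * u.coeff n := by
      simpa only [coeff_derivative, coeff_smul, smul_eq_mul] using congrArg (coeff · n) hu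
    calc u.coeff (n + 1) * ((n + 1)! : ℕ)
        = u.coeff (n + 1) * (n + 1) * n ! := by push_cast [Nat.factorial_succ]; ring
      _ = x ^ (n + 1) := by rw [hrec, mul_assoc, ih, _root_.pow_succ']

section TruncExp

variable {p : ℕ} {R : Type*} [CommRing R]

theorem truncExp_C_mul_X (x : R) :
    truncExp p (C x * X) = ∑ i ∈ range p, C (((i ! : ZMod p)⁻¹.val : R) * x ^ i) * X ^ i := by
  simp only [truncExp, mul_pow, map_mul, map_pow, map_natCast, mul_assoc]

theorem coeff_truncExp_C_mul_X (x : R) (n : ℕ) :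
    (truncExp p (C x * X)).coeff n = if n < p then ((n ! : ZMod p)⁻¹.val : R) * x ^ n else 0 := by
  rw [truncExp_C_mul_X, finsetSum_coeff]
  simp only [coeff_C_mul_X_pow, sum_ite_eq, mem_range]

theorem aeval_add_truncExp_C_mul_X [Fact p.Prime] {A : Type*} [CommRing A] [Algebra R A]
    (hR : (p : R) = 0) {x : R} (hx : x ^ p = 0) (s t : A) :
    aeval (s + t) (truncExp p (C x * X)) =
      aeval s (truncExp p (C x * X)) * aeval t (truncExp p (C x * X)) := by
  have hA : (p : A) = 0 := by rw [← map_natCast (algebraMap R A), hR, map_zero]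
  simp only [map_truncExp, map_mul, aeval_C, aeval_X, mul_add]
  refine truncExp_add hA fun j k hjk ↦ ?_
  rw [mul_pow, mul_pow, mul_mul_mul_comm, ← pow_add, ← map_pow, pow_eq_zero_of_le hjk hx,
    map_zero, zero_mul]

theorem pow_eq_zero_and_eq_truncExp_of_derivative_eq_smul [Fact p.Prime] (hR : (p : R) = 0)
    {u : R[X]} {x : R} (hdeg : u.degree < p) (hu : derivative u = x • u) (h0 : u.coeff 0 = 1) :
    x ^ p = 0 ∧ u = truncExp p (C x * X) := by
  have hfac := coeff_mul_factorial_of_derivative_eq_smul hu h0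
  refine ⟨by rw [← hfac p, coeff_eq_zero_of_degree_lt hdeg, zero_mul], ?_⟩
  ext n
  rw [coeff_truncExp_C_mul_X]
  split_ifs with hn
  · rw [← hfac n, mul_left_comm, natCast_val_inv_factorial_mul_factorial hR hn, mul_one]
  · exact coeff_eq_zero_of_degree_lt (hdeg.trans_le (by exact_mod_cast not_lt.1 hn))

end TruncExp

section Bivariate

variable {R : Type*} [CommRing R]

theorem aeval_C_X (u : R[X]) : aeval (C X : R[X][X]) u = C u := by
  induction u using Polynomial.induction_on' <;> simp_all [← C_mul_X_pow_eq_monomial]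

theorem aeval_X_eq_map_C (u : R[X]) : aeval (X : R[X][X]) u = u.map C := by
  induction u using Polynomial.induction_on' <;> simp_all [← C_mul_X_pow_eq_monomial]

theorem aeval_C_X_add_X (u : R[X]) : aeval (C X + X : R[X][X]) u = taylor X (u.map C) := by
  rw [taylor_apply, add_comm, comp_eq_aeval]
  induction u using Polynomial.induction_on' <;> simp_all [← C_mul_X_pow_eq_monomial]

theorem coeff_one_aeval_C_X_add_X (u : R[X]) :
    (aeval (C X + X : R[X][X]) u).coeff 1 = derivative u := by
  rw [aeval_C_X_add_X, taylor_coeff_one, derivative_map, eval_map, eval₂_C_X]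

theorem eq_zero_of_X_pow_dvd_of_degree_lt {n : ℕ} {q : R[X]} (hdvd : X ^ n ∣ q)
    (hdeg : q.degree < n) : q = 0 := by
  ext d
  rcases lt_or_ge d n with hd | hd
  · exact X_pow_dvd_iff.1 hdvd d hd
  · exact coeff_eq_zero_of_degree_lt (hdeg.trans_le (by exact_mod_cast hd))

theorem derivative_eq_coeff_one_smul {p : ℕ} (hp : 1 < p) {u : R[X]} (hdeg : u.degree < p)
    (h : aeval (MvPolynomial.X 0 + MvPolynomial.X 1 : MvPolynomial (Fin 2) R) u -
        aeval (MvPolynomial.X 0 : MvPolynomial (Fin 2) R) u *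
          aeval (MvPolynomial.X 1 : MvPolynomial (Fin 2) R) u ∈
      Ideal.span {(MvPolynomial.X 0 : MvPolynomial (Fin 2) R) ^ p, MvPolynomial.X 1 ^ p}) :
    derivative u = u.coeff 1 • u := by
  obtain ⟨f, g, hfg⟩ := Ideal.mem_span_pair.1 h
  set ψ : MvPolynomial (Fin 2) R →ₐ[R] R[X][X] := MvPolynomial.aeval ![C X, X]
  have hcoeff := congrArg (fun q ↦ (ψ q).coeff 1) hfg
  simp only [map_add, map_mul, map_sub, map_pow, ← aeval_algHom_apply, ψ,
    MvPolynomial.aeval_X, Matrix.cons_val_zero, Matrix.cons_val_one] at hcoeff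
  rw [coeff_add, ← C_pow, coeff_mul_C, coeff_mul_X_pow', if_neg (by omega), add_zero, coeff_sub,
    coeff_one_aeval_C_X_add_X, aeval_C_X, aeval_X_eq_map_C, coeff_C_mul, coeff_map, mul_comm u,
    C_mul'] at hcoeff
  have hlt : (derivative u - u.coeff 1 • u).degree < p :=
    (degree_sub_le _ _).trans_lt
      (max_lt (degree_derivative_le.trans_lt hdeg) ((degree_smul_le _ _).trans_lt hdeg))
  exact sub_eq_zero.1 (eq_zero_of_X_pow_dvd_of_degree_lt (Dvd.intro_left _ hcoeff) hlt)

end Bivariate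

end Polynomial

/-- Group-like elements of `R[Y]/(Y^p)` for the additive comultiplication are exactly the
truncated exponentials `E(xY)` with `x^p = 0`, and `x` is determined as the coefficient of `Y`.
(Ring-level content of the canonical self-Cartier-duality of `α_p`.) -/
theorem alpha_p_cartier_dual (p : ℕ) (hp : p.Prime) (R : Type*) [CommRing R]
    (hchar : (p : R) = 0) (u : Polynomial R) (hdeg : u.degree < p) :
    ((u.eval 0 = 1 ∧
        Polynomial.aeval (MvPolynomial.X 0 + MvPolynomial.X 1 : MvPolynomial (Fin 2) R) u -
            Polynomial.aeval (MvPolynomial.X 0 : MvPolynomial (Fin 2) R) u *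
              Polynomial.aeval (MvPolynomial.X 1 : MvPolynomial (Fin 2) R) u ∈
          Ideal.span {(MvPolynomial.X 0 : MvPolynomial (Fin 2) R) ^ p,
            (MvPolynomial.X 1 : MvPolynomial (Fin 2) R) ^ p}) ↔
      ∃ x : R, x ^ p = 0 ∧
        u = ∑ i ∈ Finset.range p,
          Polynomial.C (((((Nat.factorial i : ZMod p))⁻¹).val : R) * x ^ i) * Polynomial.X ^ i) ∧
    ∀ x : R, x ^ p = 0 →
      u = (∑ i ∈ Finset.range p,
          Polynomial.C (((((Nat.factorial i : ZMod p))⁻¹).val : R) * x ^ i) * Polynomial.X ^ i) →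
      x = u.coeff 1 := by
  have := Fact.mk hp
  have hinv_zero : (((0 ! : ZMod p)⁻¹.val : ℕ) : R) = 1 := by
    simpa using natCast_val_inv_factorial_mul_factorial hchar hp.pos
  have hinv_one : (((1 ! : ZMod p)⁻¹.val : ℕ) : R) = 1 := by
    simpa using natCast_val_inv_factorial_mul_factorial hchar hp.one_lt
  simp only [← Polynomial.truncExp_C_mul_X]
  refine ⟨⟨fun ⟨h0, hmem⟩ ↦ ?_, fun ⟨x, hx, hu⟩ ↦ ?_⟩, fun x _ hu ↦ ?_⟩
  · rw [← Polynomial.coeff_zero_eq_eval_zero] at h0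
    exact ⟨_, Polynomial.pow_eq_zero_and_eq_truncExp_of_derivative_eq_smul hchar hdeg
      (Polynomial.derivative_eq_coeff_one_smul hp.one_lt hdeg hmem) h0⟩
  · subst hu
    refine ⟨?_, by rw [Polynomial.aeval_add_truncExp_C_mul_X hchar hx, sub_self]; exact zero_mem _⟩
    rw [← Polynomial.coeff_zero_eq_eval_zero, Polynomial.coeff_truncExp_C_mul_X, if_pos hp.pos,
      hinv_zero, pow_zero, mul_one]
  · rw [hu, Polynomial.coeff_truncExp_C_mul_X, if_pos hp.one_lt, hinv_one, pow_one, one_mul]
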